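/- Fix a real m > 0. For every x ∈ ℝ, Û(x − c_m/2, 1; 1) = (max(x(c_m − x), 0))^{1/m} / (c_m^{(m+2)/m} B((m+1)/m, (m+1)/m)). In other words, the shifted ZKB profile at time 1 equals the probability density of c_m·B where B is Beta((m+1)/m, (m+1)/m)-distributed. -/
import Mathlib


open MeasureTheory

/-- The Beta function `B(a,b) = Γ(a)Γ(b)/Γ(a+b)`. -/
noncomputable def betaFn (a b : ℝ) : ℝ := Real.Gamma a * Real.Gamma b / Real.Gamma (a + b)

/-- `ρ = m/(2(m+2))`. -/
noncomputable def rhoC (m : ℝ) : ℝ := m / (2 * (m + 2))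

/-- `D = ρ^{-1/2} B(1/2, (m+1)/m)`. -/
noncomputable def DC (m : ℝ) : ℝ := rhoC m ^ (-(1 / 2) : ℝ) * betaFn (1 / 2) ((m + 1) / m)

/-- The ZKB profile `Û(x,t;θ)`. -/
noncomputable def Uhat (m θ x t : ℝ) : ℝ :=
  t ^ (-(1 / (m + 2)) : ℝ) *
    (max ((Real.sqrt 2 * θ / (DC m * Real.sqrt (m + 1))) ^ (2 * m / (m + 2))
      - 2 * rhoC m * x ^ 2 / ((m + 1) * t ^ ((2 : ℝ) / (m + 2)))) 0) ^ (1 / m)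

/-- `c_m = 2^{(m+1)/(m+2)} (m+1)^{1/(m+2)} / (D^{m/(m+2)} ρ^{1/2})`. -/
noncomputable def cC (m : ℝ) : ℝ :=
  (2 : ℝ) ^ ((m + 1) / (m + 2)) * (m + 1) ^ (1 / (m + 2)) /
    (DC m ^ (m / (m + 2)) * rhoC m ^ ((1 : ℝ) / 2))

private lemma eq_of_log_eq {P Q : ℝ} (hP : 0 < P) (hQ : 0 < Q)
    (h : Real.log P = Real.log Q) : P = Q := by
  rw [← Real.exp_log hP, ← Real.exp_log hQ, h]

/-- Legendre duplication for the Beta function. -/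
private lemma beta_dup (a : ℝ) (ha : 0 < a) :
    betaFn a a = (2 : ℝ) ^ (1 - 2 * a) * betaFn (1 / 2) a := by
  have key := Real.Gamma_mul_Gamma_add_half a
  have h2a : Real.Gamma (2 * a) ≠ 0 := (Real.Gamma_pos_of_pos (by positivity)).ne'
  have hah : Real.Gamma (a + 1 / 2) ≠ 0 := (Real.Gamma_pos_of_pos (by positivity)).ne'
  unfold betaFn
  rw [Real.Gamma_one_half_eq, show a + a = 2 * a by ring, show (1:ℝ)/2 + a = a + 1/2 by ring,
    ← mul_div_assoc, div_eq_div_iff h2a hah]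
  linear_combination Real.Gamma a * key

theorem statement11 (m : ℝ) (hm : 0 < m) :
    ∀ x : ℝ,
      Uhat m 1 (x - cC m / 2) 1
        = (max (x * (cC m - x)) 0) ^ (1 / m) /
            (cC m ^ ((m + 2) / m) * betaFn ((m + 1) / m) ((m + 1) / m)) := by
  intro x
  have hm1 : (0:ℝ) < m + 1 := by linarith
  have hm2 : (0:ℝ) < m + 2 := by linarith
  have hρ : 0 < rhoC m := by unfold rhoC; positivity
  have ha : 0 < (m + 1) / m := by positivity
  have hB1 : 0 < betaFn (1 / 2) ((m + 1) / m) := by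
    unfold betaFn
    have h1 := Real.Gamma_pos_of_pos (show (0:ℝ) < 1/2 by norm_num)
    have h2 := Real.Gamma_pos_of_pos ha
    have h3 := Real.Gamma_pos_of_pos (show (0:ℝ) < 1/2 + (m+1)/m by positivity)
    positivity
  have hD : 0 < DC m := mul_pos (Real.rpow_pos_of_pos hρ _) hB1
  have hc : 0 < cC m := by
    unfold cC
    exact div_pos (mul_pos (Real.rpow_pos_of_pos two_pos _) (Real.rpow_pos_of_pos hm1 _))
      (mul_pos (Real.rpow_pos_of_pos hD _) (Real.rpow_pos_of_pos hρ _))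
  have hBa : 0 < betaFn ((m + 1) / m) ((m + 1) / m) := by
    unfold betaFn
    have h2 := Real.Gamma_pos_of_pos ha
    have h3 := Real.Gamma_pos_of_pos (show (0:ℝ) < (m+1)/m + (m+1)/m by positivity)
    positivity
  -- B(1/2,a) = D * ρ^{1/2}
  have hB1eq : betaFn (1 / 2) ((m + 1) / m) = DC m * rhoC m ^ ((1:ℝ)/2) := by
    unfold DC
    rw [mul_comm (rhoC m ^ (-(1/2) : ℝ)) _, mul_assoc, ← Real.rpow_add hρ]
    norm_num
  -- log of c
  have hlogc : Real.log (cC m) = (m+1)/(m+2) * Real.log 2 + 1/(m+2) * Real.log (m+1)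
      - m/(m+2) * Real.log (DC m) - 1/2 * Real.log (rhoC m) := by
    unfold cC
    rw [Real.log_div (by positivity) (by positivity),
      Real.log_mul (by positivity) (by positivity),
      Real.log_mul (by positivity) (by positivity),
      Real.log_rpow two_pos, Real.log_rpow hm1, Real.log_rpow hD, Real.log_rpow hρ]
    ring
  -- log of B(a,a)
  have hlogBa : Real.log (betaFn ((m + 1) / m) ((m + 1) / m))
      = (1 - 2 * ((m+1)/m)) * Real.log 2 + Real.log (DC m) + 1/2 * Real.log (rhoC m) := by
    rw [beta_dup _ ha, hB1eq, Real.log_mul (by positivity) (by positivity),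
      Real.log_mul hD.ne' (Real.rpow_pos_of_pos hρ _).ne',
      Real.log_rpow two_pos, Real.log_rpow hρ]
    ring
  -- key scalar identity 1
  have hA : (Real.sqrt 2 / (DC m * Real.sqrt (m + 1))) ^ (2 * m / (m + 2) : ℝ)
      = rhoC m * cC m ^ 2 / (2 * (m + 1)) := by
    have hb : 0 < Real.sqrt 2 / (DC m * Real.sqrt (m + 1)) := by positivity
    apply eq_of_log_eq (Real.rpow_pos_of_pos hb _) (by positivity)
    rw [Real.log_rpow hb, Real.log_div (by positivity) (by positivity),
      Real.log_mul hD.ne' (by positivity), Real.log_sqrt (by norm_num),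
      Real.log_sqrt hm1.le, Real.log_div (by positivity) (by positivity),
      Real.log_mul (by positivity) hm1.ne', Real.log_mul hρ.ne' (by positivity),
      Real.log_pow, hlogc]
    push_cast
    field_simp
    ring
  -- key scalar identity 2
  have hk : (0:ℝ) < 2 * rhoC m / (m + 1) := by positivity
  have hk3 : (2 * rhoC m / (m + 1)) ^ ((1:ℝ)/m)
      = (cC m ^ ((m + 2) / m : ℝ) * betaFn ((m + 1) / m) ((m + 1) / m))⁻¹ := by
    apply eq_of_log_eq (Real.rpow_pos_of_pos hk _)
      (inv_pos.mpr (mul_pos (Real.rpow_pos_of_pos hc _) hBa))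
    rw [Real.log_rpow hk, Real.log_inv,
      Real.log_mul (Real.rpow_pos_of_pos hc _).ne' hBa.ne',
      Real.log_rpow hc, Real.log_div (by positivity) hm1.ne',
      Real.log_mul (by norm_num) hρ.ne', hlogc, hlogBa]
    field_simp
    ring
  -- main computation
  simp only [Uhat, Real.one_rpow, mul_one, one_mul]
  have harg : rhoC m * cC m ^ 2 / (2 * (m + 1))
      - 2 * rhoC m * (x - cC m / 2) ^ 2 / (m + 1)
      = (2 * rhoC m / (m + 1)) * (x * (cC m - x)) := by
    field_simp
    ring
  rw [hA, harg,
    show max (2 * rhoC m / (m + 1) * (x * (cC m - x))) 0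
        = (2 * rhoC m / (m + 1)) * max (x * (cC m - x)) 0 by
      rw [mul_max_of_nonneg _ _ hk.le, mul_zero],
    Real.mul_rpow hk.le (le_max_right _ _), hk3]
  ring
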